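/- Let x be K-sparse with support T, let Λᵏ ⊂ {1,…,n} with |Λᵏ| = Nk and |T ∩ Λᵏ| = l < K, and let rᵏ = P_{Λᵏ}^⊥ Φ x be the residual. Let W be the set of N indices in F = {1,…,n}\(Λᵏ ∪ T) with largest |⟨φ_j, rᵏ⟩|, and let α_N be the N-th largest such value. If the relevant RIP constants of Φ are less than 1, then α_N ≤ (δ_{N+K-l} + δ_{N+Nk} δ_{Nk+K-l}/(1-δ_{Nk})) · ‖x_{T\Λᵏ}‖₂ / √N. -/

import Mathlib

/-! Write `‖·‖` for `l2norm` and `v = x_{T∖Λ}`. Since `x - v` lives on `Λ`, the residual is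
`r = Φ v - Φ z`, where `Φ z` (with `z` supported on `Λ`) is the orthogonal projection of `Φ v`
onto the span of the columns in `Λ`. The RIP makes the images of disjointly supported vectors
nearly orthogonal: `|⟪Φ u, Φ w⟫| ≤ δ ‖u‖ ‖w‖`. Applied to `u = (Φᵀ r)_W` this gives
`‖u‖² = ⟪Φ u, Φ v⟫ - ⟪Φ u, Φ z⟫ ≤ ‖u‖ (δ₁ ‖v‖ + δ₂ ‖z‖)`, and applied to `z, v` together with
the lower RIP bound it gives `(1 - δ₄) ‖z‖² ≤ ‖Φ z‖² = ⟪Φ z, Φ v⟫ ≤ δ₃ ‖z‖ ‖v‖`. Finally all `N`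
entries of `u` are at least `α_N` in absolute value, so `√N α_N ≤ ‖u‖`. -/

open Matrix

/-- A vector is K-sparse if it has at most K nonzero entries. -/
def IsSparse {n : ℕ} (K : ℕ) (x : Fin n → ℝ) : Prop :=
  (Finset.univ.filter fun i => x i ≠ 0).card ≤ K

/-- The Euclidean (ℓ₂) norm of a finitely-indexed real vector. -/
noncomputable def l2norm {ι : Type*} [Fintype ι] (v : ι → ℝ) : ℝ :=
  Real.sqrt (∑ i, v i ^ 2)

/-- Φ satisfies the RIP of order K with constant δ. -/
def SatisfiesRIP {m n : ℕ} (Φ : Matrix (Fin m) (Fin n) ℝ) (K : ℕ) (δ : ℝ) : Prop :=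
  ∀ x : Fin n → ℝ, IsSparse K x →
    (1 - δ) * l2norm x ^ 2 ≤ l2norm (Φ.mulVec x) ^ 2 ∧
    l2norm (Φ.mulVec x) ^ 2 ≤ (1 + δ) * l2norm x ^ 2

/-- The column-submatrix of Φ consisting of columns indexed by I. -/
def colSub {m n : ℕ} (Φ : Matrix (Fin m) (Fin n) ℝ) (I : Finset (Fin n)) :
    Matrix (Fin m) I ℝ :=
  fun i j => Φ i (j : Fin n)

open Function Finset

lemma support_sub_indicator_sdiff_subset {ι M : Type*} [AddGroup M] [DecidableEq ι] {x : ι → M}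
    {T Λ : Finset ι} (hx : support x ⊆ T) :
    support (x - ((T \ Λ : Finset ι) : Set ι).indicator x) ⊆ Λ := fun i hi => by
  by_contra hiΛ
  refine hi (sub_eq_zero.2 ?_)
  by_cases hiT : i ∈ T
  · exact (Set.indicator_of_mem (by simp [hiT, hiΛ]) x).symm
  · rw [notMem_support.1 fun h => hiT (hx h)]
    exact (Set.indicator_of_notMem (by simp [hiT]) x).symm

section Vectors

variable {ι : Type*} [Fintype ι]

lemma l2norm_nonneg (v : ι → ℝ) : 0 ≤ l2norm v :=
  Real.sqrt_nonneg _

lemma l2norm_sq (v : ι → ℝ) : l2norm v ^ 2 = v ⬝ᵥ v := by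
  rw [l2norm, Real.sq_sqrt (by positivity)]
  simp only [dotProduct, sq]

lemma eq_zero_of_l2norm_eq_zero {v : ι → ℝ} (h : l2norm v = 0) : v = 0 := by
  rw [← dotProduct_self_eq_zero, ← l2norm_sq, h, sq, mul_zero]

lemma l2norm_indicator (s : Finset ι) (f : ι → ℝ) :
    l2norm ((s : Set ι).indicator f) = √(∑ i ∈ s, f i ^ 2) := by
  rw [l2norm, ← sum_indicator_subset (fun i => f i ^ 2) (subset_univ s)]
  congr 1
  refine sum_congr rfl fun i _ => ?_
  by_cases hi : i ∈ s <;> simp [hi]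

lemma indicator_dotProduct_indicator (s : Finset ι) (f : ι → ℝ) :
    (s : Set ι).indicator f ⬝ᵥ (s : Set ι).indicator f = (s : Set ι).indicator f ⬝ᵥ f := by
  refine sum_congr rfl fun i _ => ?_
  by_cases hi : i ∈ s <;> simp [hi]

lemma l2norm_smul_add_smul_sq (a b : ℝ) (p q : ι → ℝ) :
    l2norm (a • p + b • q) ^ 2 =
      a ^ 2 * l2norm p ^ 2 + 2 * a * b * (p ⬝ᵥ q) + b ^ 2 * l2norm q ^ 2 := by
  simp only [l2norm_sq, add_dotProduct, dotProduct_add, smul_dotProduct, dotProduct_smul,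
    dotProduct_comm q p, smul_eq_mul]
  ring

lemma dotProduct_eq_zero_of_disjoint {u v : ι → ℝ} {S₁ S₂ : Finset ι}
    (hu : support u ⊆ S₁) (hv : support v ⊆ S₂) (hS : Disjoint S₁ S₂) : u ⬝ᵥ v = 0 := by
  refine sum_eq_zero fun i _ => ?_
  by_cases hi : u i = 0
  · rw [hi, zero_mul]
  · rw [notMem_support.1 fun h => disjoint_left.1 hS (hu hi) (hv h), mul_zero]

lemma inf'_abs_mul_sqrt_card_le {W : Finset ι} (hW : W.Nonempty) (f : ι → ℝ) :
    W.inf' hW (fun j => |f j|) * √W.card ≤ l2norm ((W : Set ι).indicator f) := by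
  set α := W.inf' hW fun j => |f j|
  have hα : 0 ≤ α := le_inf' hW _ fun j _ => abs_nonneg (f j)
  rw [l2norm_indicator, ← Real.sqrt_sq hα, ← Real.sqrt_mul (sq_nonneg α), mul_comm,
    ← nsmul_eq_mul]
  refine Real.sqrt_le_sqrt (card_nsmul_le_sum W _ _ fun j hj => ?_)
  rw [← sq_abs (f j)]
  exact pow_le_pow_left₀ hα (inf'_le _ hj) 2

end Vectors

section RIP

variable {m n : ℕ} {Φ : Matrix (Fin m) (Fin n) ℝ}

lemma isSparse_of_support_subset {s : ℕ} {u : Fin n → ℝ} {S : Finset (Fin n)}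
    (hu : support u ⊆ S) (hS : S.card ≤ s) : IsSparse s u :=
  (card_le_card fun _ hi => mem_coe.1 (hu (mem_filter.1 hi).2) : IsSparse S.card u).trans hS

theorem SatisfiesRIP.abs_dotProduct_mulVec_le {s : ℕ} {δ : ℝ} (hRIP : SatisfiesRIP Φ s δ)
    {u v : Fin n → ℝ} {S₁ S₂ : Finset (Fin n)} (hu : support u ⊆ S₁) (hv : support v ⊆ S₂)
    (hS : Disjoint S₁ S₂) (hcard : (S₁ ∪ S₂).card ≤ s) :
    |Φ *ᵥ u ⬝ᵥ Φ *ᵥ v| ≤ δ * (l2norm u * l2norm v) := by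
  have huv : u ⬝ᵥ v = 0 := dotProduct_eq_zero_of_disjoint hu hv hS
  have hrip : ∀ a b : ℝ,
      (1 - δ) * (a ^ 2 * l2norm u ^ 2 + b ^ 2 * l2norm v ^ 2) ≤
        a ^ 2 * l2norm (Φ *ᵥ u) ^ 2 + 2 * a * b * (Φ *ᵥ u ⬝ᵥ Φ *ᵥ v) +
          b ^ 2 * l2norm (Φ *ᵥ v) ^ 2 ∧
      a ^ 2 * l2norm (Φ *ᵥ u) ^ 2 + 2 * a * b * (Φ *ᵥ u ⬝ᵥ Φ *ᵥ v) +
          b ^ 2 * l2norm (Φ *ᵥ v) ^ 2 ≤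
        (1 + δ) * (a ^ 2 * l2norm u ^ 2 + b ^ 2 * l2norm v ^ 2) := by
    intro a b
    have hsupp : support (a • u + b • v) ⊆ ↑(S₁ ∪ S₂) := by
      rw [coe_union]
      exact (support_add _ _).trans (Set.union_subset_union
        ((support_const_smul_subset a u).trans hu) ((support_const_smul_subset b v).trans hv))
    have h := hRIP _ (isSparse_of_support_subset hsupp hcard)
    rwa [mulVec_add, mulVec_smul, mulVec_smul, l2norm_smul_add_smul_sq,
      l2norm_smul_add_smul_sq, huv, mul_zero, add_zero] at h
  rcases (l2norm_nonneg u).eq_or_lt with hu0 | hu0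
  · rw [← hu0, eq_zero_of_l2norm_eq_zero hu0.symm]
    simp
  rcases (l2norm_nonneg v).eq_or_lt with hv0 | hv0
  · rw [← hv0, eq_zero_of_l2norm_eq_zero hv0.symm]
    simp
  -- polarization with the weights `a = ‖v‖`, `b = ±‖u‖`
  obtain ⟨h₁, h₂⟩ := hrip (l2norm v) (l2norm u)
  obtain ⟨h₃, h₄⟩ := hrip (l2norm v) (-l2norm u)
  have huv0 := mul_pos hu0 hv0
  rw [abs_le]
  constructor <;> nlinarith

end RIP

section Projection

variable {κ ι : Type*} [Fintype κ] [Fintype ι] [DecidableEq ι] (A : Matrix κ ι ℝ)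

noncomputable def orthProj : Matrix κ κ ℝ :=
  A * (Aᵀ * A)⁻¹ * Aᵀ

lemma orthProj_mulVec (y : κ → ℝ) : orthProj A *ᵥ y = A *ᵥ (((Aᵀ * A)⁻¹ * Aᵀ) *ᵥ y) := by
  rw [orthProj, mulVec_mulVec, Matrix.mul_assoc]

variable {A}

lemma orthProj_mulVec_mulVec (hA : IsUnit (Aᵀ * A)) (p : ι → ℝ) :
    orthProj A *ᵥ (A *ᵥ p) = A *ᵥ p := by
  rw [orthProj, mulVec_mulVec, Matrix.mul_assoc, Matrix.mul_assoc,
    nonsing_inv_mul _ ((isUnit_iff_isUnit_det _).1 hA), Matrix.mul_one]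

lemma mulVec_dotProduct_sub_orthProj (hA : IsUnit (Aᵀ * A)) (p : ι → ℝ) (y : κ → ℝ) :
    A *ᵥ p ⬝ᵥ (y - orthProj A *ᵥ y) = 0 := by
  rw [dotProduct_comm, dotProduct_mulVec, ← mulVec_transpose, mulVec_sub, orthProj_mulVec,
    mulVec_mulVec, mulVec_mulVec, ← Matrix.mul_assoc,
    mul_nonsing_inv _ ((isUnit_iff_isUnit_det _).1 hA), Matrix.one_mul, sub_self, zero_dotProduct]

end Projection

section Residual

variable {m n : ℕ} (Φ : Matrix (Fin m) (Fin n) ℝ) {Λ : Finset (Fin n)}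

lemma mulVec_eq_colSub_mulVec {w : Fin n → ℝ} (hw : support w ⊆ Λ) :
    Φ *ᵥ w = colSub Φ Λ *ᵥ fun j : Λ => w j := by
  funext i
  refine (sum_subset (subset_univ Λ) fun j _ hj => ?_).symm.trans (sum_coe_sort Λ _).symm
  rw [notMem_support.1 fun h => hj (hw h), mul_zero]

lemma exists_colSub_mulVec_eq_mulVec (p : Λ → ℝ) :
    ∃ z : Fin n → ℝ, support z ⊆ Λ ∧ colSub Φ Λ *ᵥ p = Φ *ᵥ z := by
  set z : Fin n → ℝ := fun i => if h : i ∈ Λ then p ⟨i, h⟩ else 0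
  have hz : support z ⊆ Λ := fun i hi => by
    by_contra h
    exact hi (dif_neg h)
  refine ⟨z, hz, ?_⟩
  rw [mulVec_eq_colSub_mulVec Φ hz]
  congr 1
  funext j
  simp [z]

theorem exists_residual_eq (hrank : IsUnit ((colSub Φ Λ)ᵀ * colSub Φ Λ)) {x v : Fin n → ℝ}
    (hxv : support (x - v) ⊆ Λ) :
    ∃ z : Fin n → ℝ, support z ⊆ Λ ∧
      Φ *ᵥ x - orthProj (colSub Φ Λ) *ᵥ (Φ *ᵥ x) = Φ *ᵥ v - Φ *ᵥ z ∧
      Φ *ᵥ z ⬝ᵥ (Φ *ᵥ v - Φ *ᵥ z) = 0 := by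
  set A := colSub Φ Λ
  set c := ((Aᵀ * A)⁻¹ * Aᵀ) *ᵥ (Φ *ᵥ v)
  obtain ⟨z, hz, hAz⟩ := exists_colSub_mulVec_eq_mulVec Φ c
  have hPv : orthProj A *ᵥ (Φ *ᵥ v) = Φ *ᵥ z := (orthProj_mulVec A _).trans hAz
  have hPw : orthProj A *ᵥ (Φ *ᵥ (x - v)) = Φ *ᵥ (x - v) := by
    rw [mulVec_eq_colSub_mulVec Φ hxv, orthProj_mulVec_mulVec hrank]
  refine ⟨z, hz, ?_, ?_⟩
  · rw [← add_sub_cancel v x, mulVec_add, mulVec_add, hPv, hPw]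
    abel
  · have h := mulVec_dotProduct_sub_orthProj hrank c (Φ *ᵥ v)
    rwa [hPv, hAz] at h

end Residual

section Bounds

variable {m n : ℕ} {Φ : Matrix (Fin m) (Fin n) ℝ}

theorem SatisfiesRIP.l2norm_le_of_orthogonal {s₃ s₄ : ℕ} {δ₃ δ₄ : ℝ}
    (hRIP₃ : SatisfiesRIP Φ s₃ δ₃) (hRIP₄ : SatisfiesRIP Φ s₄ δ₄) (hδ₃ : 0 ≤ δ₃) (hδ₄ : δ₄ < 1)
    {z v : Fin n → ℝ} {Λ S : Finset (Fin n)} (hz : support z ⊆ Λ) (hv : support v ⊆ S)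
    (hΛS : Disjoint Λ S) (hΛ : Λ.card ≤ s₄) (hcard : (Λ ∪ S).card ≤ s₃)
    (horth : Φ *ᵥ z ⬝ᵥ (Φ *ᵥ v - Φ *ᵥ z) = 0) :
    l2norm z ≤ δ₃ * l2norm v / (1 - δ₄) := by
  have hlower : (1 - δ₄) * l2norm z ^ 2 ≤ l2norm (Φ *ᵥ z) ^ 2 :=
    (hRIP₄ z (isSparse_of_support_subset hz hΛ)).1
  have hcorr : l2norm (Φ *ᵥ z) ^ 2 = Φ *ᵥ z ⬝ᵥ Φ *ᵥ v := by
    rw [dotProduct_sub, sub_eq_zero] at horth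
    rw [l2norm_sq, horth]
  have hupper := (le_abs_self _).trans (hRIP₃.abs_dotProduct_mulVec_le hz hv hΛS hcard)
  rw [le_div_iff₀ (sub_pos.2 hδ₄)]
  rcases (l2norm_nonneg z).eq_or_lt with hz0 | hz0
  · rw [← hz0, zero_mul]
    exact mul_nonneg hδ₃ (l2norm_nonneg v)
  · nlinarith

theorem SatisfiesRIP.l2norm_indicator_transpose_mulVec_le {s₁ s₂ : ℕ} {δ₁ δ₂ : ℝ}
    (hRIP₁ : SatisfiesRIP Φ s₁ δ₁) (hRIP₂ : SatisfiesRIP Φ s₂ δ₂) (hδ₁ : 0 ≤ δ₁) (hδ₂ : 0 ≤ δ₂)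
    {v z : Fin n → ℝ} {W S Λ : Finset (Fin n)} (hv : support v ⊆ S) (hz : support z ⊆ Λ)
    (hWS : Disjoint W S) (hWΛ : Disjoint W Λ) (h₁ : (W ∪ S).card ≤ s₁)
    (h₂ : (W ∪ Λ).card ≤ s₂) :
    l2norm ((W : Set (Fin n)).indicator (Φᵀ *ᵥ (Φ *ᵥ v - Φ *ᵥ z))) ≤
      δ₁ * l2norm v + δ₂ * l2norm z := by
  set u := (W : Set (Fin n)).indicator (Φᵀ *ᵥ (Φ *ᵥ v - Φ *ᵥ z))
  have hu : support u ⊆ W := Set.support_indicator_subset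
  have hsq : l2norm u ^ 2 = Φ *ᵥ u ⬝ᵥ Φ *ᵥ v - Φ *ᵥ u ⬝ᵥ Φ *ᵥ z := by
    rw [l2norm_sq, indicator_dotProduct_indicator, dotProduct_mulVec, vecMul_transpose,
      dotProduct_sub]
  have hv' := abs_le.1 (hRIP₁.abs_dotProduct_mulVec_le hu hv hWS h₁)
  have hz' := abs_le.1 (hRIP₂.abs_dotProduct_mulVec_le hu hz hWΛ h₂)
  rcases (l2norm_nonneg u).eq_or_lt with hu0 | hu0
  · rw [← hu0]
    exact add_nonneg (mul_nonneg hδ₁ (l2norm_nonneg v)) (mul_nonneg hδ₂ (l2norm_nonneg z))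
  · nlinarith

end Bounds

theorem alphaN_upper_bound_general {m n : ℕ} (Φ : Matrix (Fin m) (Fin n) ℝ)
    (x : Fin n → ℝ) (K N k l : ℕ) (hN : 0 < N)
    (T Λ : Finset (Fin n)) (hT : T = Finset.univ.filter fun i => x i ≠ 0)
    (hTK : T.card = K) (hΛ : Λ.card = N * k) (hl : (T ∩ Λ).card = l)
    (hrank : IsUnit ((colSub Φ Λ)ᵀ * colSub Φ Λ))
    (r : Fin m → ℝ)
    (hr : r = Φ.mulVec x -
      (colSub Φ Λ * ((colSub Φ Λ)ᵀ * colSub Φ Λ)⁻¹ * (colSub Φ Λ)ᵀ).mulVec (Φ.mulVec x))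
    (W : Finset (Fin n)) (hWne : W.Nonempty)
    (hWF : W ⊆ Finset.univ \ (Λ ∪ T)) (hWcard : W.card = N)
    (δ₁ δ₂ δ₃ δ₄ : ℝ)
    (hδ₁ : 0 ≤ δ₁) (hRIP₁ : SatisfiesRIP Φ (N + K - l) δ₁)
    (hδ₂ : 0 ≤ δ₂) (hRIP₂ : SatisfiesRIP Φ (N + N * k) δ₂)
    (hδ₃ : 0 ≤ δ₃) (hRIP₃ : SatisfiesRIP Φ (N * k + K - l) δ₃)
    (hδ₄' : δ₄ < 1) (hRIP₄ : SatisfiesRIP Φ (N * k) δ₄) :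
    W.inf' hWne (fun j => |Φᵀ.mulVec r j|) ≤
      (δ₁ + δ₂ * δ₃ / (1 - δ₄)) * Real.sqrt (∑ i ∈ T \ Λ, x i ^ 2) / Real.sqrt N := by
  classical
  have hxT : support x ⊆ T := fun i hi => by simpa [hT] using hi
  set v := ((T \ Λ : Finset (Fin n)) : Set (Fin n)).indicator x
  have hv : support v ⊆ ↑(T \ Λ) := Set.support_indicator_subset
  have hxv : support (x - v) ⊆ Λ := support_sub_indicator_sdiff_subset hxT
  obtain ⟨z, hzΛ, hres, horth⟩ := exists_residual_eq Φ hrank hxv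
  obtain rfl : r = Φ *ᵥ v - Φ *ᵥ z := hr.trans hres
  have hWΛT : Disjoint W (Λ ∪ T) := (subset_sdiff.1 hWF).2
  have hWΛ : Disjoint W Λ := (disjoint_union_right.1 hWΛT).1
  have hWTΛ : Disjoint W (T \ Λ) := (disjoint_union_right.1 hWΛT).2.mono_right sdiff_subset
  have hTΛ : (T \ Λ).card + l = K := hl ▸ hTK ▸ card_sdiff_add_card_inter T Λ
  have hz := hRIP₃.l2norm_le_of_orthogonal hRIP₄ hδ₃ hδ₄' hzΛ hv disjoint_sdiff hΛ.le
    ((card_union_le _ _).trans (by omega)) horth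
  have hu := hRIP₁.l2norm_indicator_transpose_mulVec_le hRIP₂ hδ₁ hδ₂ hv hzΛ hWTΛ hWΛ
    ((card_union_le _ _).trans (by omega)) ((card_union_le _ _).trans (by omega))
  have hα := inf'_abs_mul_sqrt_card_le hWne (Φᵀ *ᵥ (Φ *ᵥ v - Φ *ᵥ z))
  rw [hWcard] at hα
  rw [le_div_iff₀ (by positivity), ← l2norm_indicator]
  calc _ ≤ δ₁ * l2norm v + δ₂ * l2norm z := hα.trans hu
    _ ≤ δ₁ * l2norm v + δ₂ * (δ₃ * l2norm v / (1 - δ₄)) := by gcongr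
    _ = _ := by ring

theorem alphaN_upper_bound {m n : ℕ} (Φ : Matrix (Fin m) (Fin n) ℝ)
    (x : Fin n → ℝ) (K N k l : ℕ) (hN : 0 < N) (hlK : l < K)
    (T Λ : Finset (Fin n)) (hT : T = Finset.univ.filter fun i => x i ≠ 0)
    (hTK : T.card = K) (hΛ : Λ.card = N * k) (hl : (T ∩ Λ).card = l)
    (hrank : IsUnit ((colSub Φ Λ)ᵀ * colSub Φ Λ))
    (r : Fin m → ℝ)
    (hr : r = Φ.mulVec x -
      (colSub Φ Λ * ((colSub Φ Λ)ᵀ * colSub Φ Λ)⁻¹ * (colSub Φ Λ)ᵀ).mulVec (Φ.mulVec x))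
    (W : Finset (Fin n)) (hWne : W.Nonempty)
    (hWF : W ⊆ Finset.univ \ (Λ ∪ T)) (hWcard : W.card = N)
    (hWmax : ∀ i ∈ W, ∀ j ∈ (Finset.univ \ (Λ ∪ T)) \ W,
      |Φᵀ.mulVec r j| ≤ |Φᵀ.mulVec r i|)
    (δ₁ δ₂ δ₃ δ₄ : ℝ)
    (hδ₁ : 0 ≤ δ₁) (hδ₁' : δ₁ < 1) (hRIP₁ : SatisfiesRIP Φ (N + K - l) δ₁)
    (hδ₂ : 0 ≤ δ₂) (hδ₂' : δ₂ < 1) (hRIP₂ : SatisfiesRIP Φ (N + N * k) δ₂)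
    (hδ₃ : 0 ≤ δ₃) (hδ₃' : δ₃ < 1) (hRIP₃ : SatisfiesRIP Φ (N * k + K - l) δ₃)
    (hδ₄ : 0 ≤ δ₄) (hδ₄' : δ₄ < 1) (hRIP₄ : SatisfiesRIP Φ (N * k) δ₄) :
    W.inf' hWne (fun j => |Φᵀ.mulVec r j|) ≤
      (δ₁ + δ₂ * δ₃ / (1 - δ₄)) * Real.sqrt (∑ i ∈ T \ Λ, x i ^ 2) / Real.sqrt N :=
  alphaN_upper_bound_general Φ x K N k l hN T Λ hT hTK hΛ hl hrank r hr W hWne hWF hWcard δ₁ δ₂ δ₃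
    δ₄ hδ₁ hRIP₁ hδ₂ hRIP₂ hδ₃ hRIP₃ hδ₄' hRIP₄
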